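/- Let u, v be unitary operators on H with u − 1 and v − 1 compact. Then: (a) the family ((u p_i u* − v p_i v*) p_i)_{i≥0} (where the index i = 0 uses p_0) is summable in the operator norm of B(H); and (b) if C ≥ 0 is such that ‖u·P(u*·y) − v·P(v*·y)‖ ≤ C for every compact y with ‖y‖ ≤ 1, then ‖Σ_{i≥0} (u p_i u* − v p_i v*) p_i‖ ≤ 3C. -/

import Mathlib

/-!
For `i ≥ 1` write `Dᵢ = u pᵢ u* - v pᵢ v*`. Testing the hypothesis on `y = g R`, where
`R` is the projection onto the finite-dimensional span of the vectors `pᵢ (h ζ)`, `i ∈ s`, shows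
that every partial sum of `Dᵢ g pᵢ h` has norm at most `C` when `‖g‖, ‖h‖ ≤ 1`. With `g = h = 1`
this bounds the blocks `i ≥ 1` by `C`. With `(g, h) = (u, u*)` and `(v, v*)`, the identity
`Dᵢ = Dᵢ (u pᵢ u*) + (v pᵢ v*) Dᵢ` for the projections `u pᵢ u*`, `v pᵢ v*` bounds the partial sums
of `Dᵢ` by `2C`. Since `p₀, p₁, …` sum strongly to `1`, so do their conjugates by `u` and by `v`;
hence `(u p₀ u* - v p₀ v*) p₀ = -∑ Dᵢ p₀` strongly and the block `i = 0` has norm at most `2C`.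
Summability holds because `u - v` and its adjoint are compact and the tail projections
`∑_{i ∈ t} pᵢ` tend to `0` uniformly on compact sets.
-/

/-- The pinching operator associated with a family of mutually orthogonal projections. -/
noncomputable def pinch {H : Type*} [NormedAddCommGroup H] [InnerProductSpace ℂ H]
    (p : ℕ → H →L[ℂ] H) (x : H →L[ℂ] H) : H →L[ℂ] H :=
  ∑' i, p i * x * p i

/-- The family `{p_i}_{i ≥ 0}` obtained by adjoining the complementary projection `p₀`. -/
def extFam {H : Type*} [NormedAddCommGroup H] [InnerProductSpace ℂ H]
    (p0 : H →L[ℂ] H) (p : ℕ → H →L[ℂ] H) : ℕ → H →L[ℂ] H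
  | 0 => p0
  | n + 1 => p n

structure IsOrthogonalProjectionFamily {ι A : Type*} [Mul A] [Zero A] [Star A] (q : ι → A) :
    Prop where
  isStarProjection : ∀ i, IsStarProjection (q i)
  mul_eq_zero : Pairwise fun i j => q i * q j = 0

def conjDiff {A : Type*} [Ring A] [Star A] (u v e : A) : A :=
  u * e * star u - v * e * star v

theorem IsStarProjection.conj {A : Type*} [Semiring A] [StarRing A] {p : A}
    (hp : IsStarProjection p) {u : A} (hu : star u * u = 1) :
    IsStarProjection (u * p * star u) where
  isIdempotentElem := by
    calc u * p * star u * (u * p * star u) = u * (p * (star u * u) * p) * star u := by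
          simp only [mul_assoc]
      _ = u * p * star u := by rw [hu, mul_one, hp.isIdempotentElem.eq, mul_assoc]
  isSelfAdjoint := by
    rw [IsSelfAdjoint, star_mul, star_mul, star_star, hp.isSelfAdjoint.star_eq, mul_assoc]

theorem IsIdempotentElem.sub_eq_sub_mul_add_mul_sub {A : Type*} [Ring A] {e f : A}
    (he : IsIdempotentElem e) (hf : IsIdempotentElem f) : e - f = (e - f) * e + f * (e - f) := by
  rw [sub_mul, mul_sub, he.eq, hf.eq]
  abel

theorem HasSum.norm_le_of_forall_norm_sum_le {ι E : Type*} [SeminormedAddCommGroup E]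
    {f : ι → E} {a : E} {c : ℝ} (hf : HasSum f a) (h : ∀ s, ‖∑ i ∈ s, f i‖ ≤ c) : ‖a‖ ≤ c :=
  le_of_tendsto' hf.norm h

section Operators

variable {H : Type*} [NormedAddCommGroup H] [InnerProductSpace ℂ H] [CompleteSpace H]

theorem IsStarProjection.norm_apply_le {e : H →L[ℂ] H} (he : IsStarProjection e) (x : H) :
    ‖e x‖ ≤ ‖x‖ :=
  (e.le_of_opNorm_le (he.norm_le e) x).trans_eq (one_mul _)

theorem norm_le_one_of_star_mul_self_eq_one {u : H →L[ℂ] H} (hu : star u * u = 1) : ‖u‖ ≤ 1 :=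
  ContinuousLinearMap.opNorm_le_bound _ zero_le_one fun x => by
    rw [u.norm_map_iff_adjoint_comp_self.mpr hu x, one_mul]

theorem isCompactOperator_star_sub {u v : H →L[ℂ] H} (hu : star u * u = 1)
    (hv : star v * v = 1) (hucpt : IsCompactOperator ⇑(u - 1))
    (hvcpt : IsCompactOperator ⇑(v - 1)) : IsCompactOperator ⇑(star (u - v)) := by
  have : star (u - v) = star v * (v - 1) - star u * (u - 1) := by
    rw [star_sub, mul_sub, mul_sub, hu, hv, mul_one, mul_one]
    abel
  rw [this]
  exact (hvcpt.clm_comp (star v)).sub (hucpt.clm_comp (star u))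

end Operators

namespace IsOrthogonalProjectionFamily

section Algebra

variable {ι A : Type*} [NonUnitalSemiring A] [StarRing A] {q : ι → A}
  (hq : IsOrthogonalProjectionFamily q)
include hq

theorem mul_sum_of_mem {s : Finset ι} {i : ι} (hi : i ∈ s) : q i * ∑ j ∈ s, q j = q i := by
  rw [Finset.mul_sum, Finset.sum_eq_single_of_mem i hi fun j _ hji => hq.mul_eq_zero hji.symm]
  exact (hq.isStarProjection i).isIdempotentElem.eq

theorem sum_mul_of_mem {s : Finset ι} {i : ι} (hi : i ∈ s) : (∑ j ∈ s, q j) * q i = q i := by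
  rw [Finset.sum_mul, Finset.sum_eq_single_of_mem i hi fun j _ hji => hq.mul_eq_zero hji]
  exact (hq.isStarProjection i).isIdempotentElem.eq

theorem isStarProjection_sum (s : Finset ι) : IsStarProjection (∑ i ∈ s, q i) := by
  classical
  induction s using Finset.induction_on with
  | empty => simp [IsStarProjection.zero]
  | insert a s ha ih =>
    rw [Finset.sum_insert ha]
    refine (hq.isStarProjection a).add ih ?_
    rw [Finset.mul_sum]
    exact Finset.sum_eq_zero fun j hj => hq.mul_eq_zero fun h => ha (h ▸ hj)

end Algebra

section Hilbert

variable {ι H : Type*} [NormedAddCommGroup H] [InnerProductSpace ℂ H] [CompleteSpace H]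
  {q : ι → H →L[ℂ] H} (hq : IsOrthogonalProjectionFamily q)
include hq

theorem norm_sum_apply_le (s : Finset ι) (x : H) : ‖∑ i ∈ s, q i x‖ ≤ ‖x‖ := by
  rw [← sum_apply]
  exact (hq.isStarProjection_sum s).norm_apply_le x

theorem inner_apply_apply_eq_zero {i j : ι} (hij : i ≠ j) (x y : H) :
    inner ℂ (q i x) (q j y) = 0 := by
  have hsymm := (hq.isStarProjection i).isSelfAdjoint.isSymmetric x (q j y)
  simp only [ContinuousLinearMap.coe_coe] at hsymm
  rw [hsymm, ← mul_apply_eq_comp, hq.mul_eq_zero hij, zero_apply, inner_zero_right]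

theorem norm_sq_sum_apply (s : Finset ι) (x : ι → H) :
    ‖∑ i ∈ s, q i (x i)‖ ^ 2 = ∑ i ∈ s, ‖q i (x i)‖ ^ 2 := by
  rw [← inner_self_eq_norm_sq (𝕜 := ℂ), sum_inner, map_sum]
  refine Finset.sum_congr rfl fun i hi => ?_
  rw [inner_sum, Finset.sum_eq_single_of_mem i hi fun j _ hji =>
    hq.inner_apply_apply_eq_zero hji.symm _ _, inner_self_eq_norm_sq]

theorem sum_norm_sq_apply_le (s : Finset ι) (x : H) : ∑ i ∈ s, ‖q i x‖ ^ 2 ≤ ‖x‖ ^ 2 := by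
  rw [← hq.norm_sq_sum_apply s fun _ => x]
  exact pow_le_pow_left₀ (norm_nonneg _) (hq.norm_sum_apply_le s x) 2

theorem summable_apply (x : H) : Summable fun i => q i x := by
  have hsq : Summable fun i => ‖q i x‖ ^ 2 :=
    summable_of_sum_le (fun _ => sq_nonneg _) (hq.sum_norm_sq_apply_le · x)
  refine summable_iff_vanishing_norm.mpr fun ε hε => ?_
  obtain ⟨s, hs⟩ := summable_iff_vanishing_norm.mp hsq (ε ^ 2) (pow_pos hε 2)
  refine ⟨s, fun t ht => lt_of_pow_lt_pow_left₀ 2 hε.le ?_⟩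
  rw [hq.norm_sq_sum_apply t fun _ => x]
  exact (le_abs_self _).trans_lt (Real.norm_eq_abs _ ▸ hs t ht)

theorem hasSum_apply (hcomplete : ∀ x, (∀ i, q i x = 0) → x = 0) (x : H) :
    HasSum (fun i => q i x) x := by
  have hfix : ∀ j, q j (∑' i, q i x) = q j x := fun j => by
    rw [(q j).map_tsum (hq.summable_apply x), tsum_eq_single j fun i hij => ?_]
    · rw [← mul_apply_eq_comp, (hq.isStarProjection j).isIdempotentElem.eq]
    · rw [← mul_apply_eq_comp, hq.mul_eq_zero hij.symm, zero_apply]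
  refine (hq.summable_apply x).hasSum_iff.mpr (sub_eq_zero.mp <| hcomplete _ fun j => ?_)
  rw [map_sub, hfix, sub_self]

theorem norm_sum_mul_mul_le (X : H →L[ℂ] H) (s : Finset ι) :
    ‖∑ i ∈ s, q i * X * q i‖ ≤ ‖X‖ := by
  refine ContinuousLinearMap.opNorm_le_bound _ (norm_nonneg X) fun ξ => ?_
  refine (pow_le_pow_iff_left₀ (norm_nonneg _) (by positivity) two_ne_zero).mp ?_
  calc ‖(∑ i ∈ s, q i * X * q i) ξ‖ ^ 2 = ∑ i ∈ s, ‖q i (X (q i ξ))‖ ^ 2 :=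
        by rw [sum_apply]; exact hq.norm_sq_sum_apply s _
    _ ≤ ∑ i ∈ s, ‖X‖ ^ 2 * ‖q i ξ‖ ^ 2 := Finset.sum_le_sum fun i _ => by
        rw [← mul_pow]
        exact pow_le_pow_left₀ (norm_nonneg _)
          (((hq.isStarProjection i).norm_apply_le _).trans (X.le_opNorm _)) 2
    _ ≤ (‖X‖ * ‖ξ‖) ^ 2 := by
        rw [← Finset.mul_sum, mul_pow]
        exact mul_le_mul_of_nonneg_left (hq.sum_norm_sq_apply_le s ξ) (sq_nonneg _)

theorem exists_norm_sum_mul_le_of_isCompactOperator {K : H →L[ℂ] H}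
    (hK : IsCompactOperator K) {ε : ℝ} (hε : 0 < ε) :
    ∃ s : Finset ι, ∀ t, Disjoint t s → ‖(∑ i ∈ t, q i) * K‖ ≤ ε := by
  classical
  obtain ⟨B, hBcpt, hKB⟩ := hK.image_closedBall_subset_compact (f := (K : H →ₗ[ℂ] H)) 1
  obtain ⟨N, hNfin, hN⟩ := Metric.totallyBounded_iff.mp hBcpt.totallyBounded (ε / 2) (half_pos hε)
  choose S hS using fun y => summable_iff_vanishing_norm.mp (hq.summable_apply y) _ (half_pos hε)
  refine ⟨hNfin.toFinset.biUnion S, fun t ht =>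
    ContinuousLinearMap.opNorm_le_of_unit_norm hε.le fun ξ hξ => ?_⟩
  obtain ⟨y, hyN, hy⟩ := Set.mem_iUnion₂.mp <| hN <| hKB ⟨ξ, by simp [hξ], rfl⟩
  have hty : Disjoint t (S y) :=
    ht.mono_right (Finset.subset_biUnion_of_mem S (hNfin.mem_toFinset.mpr hyN))
  have hsplit : ((∑ i ∈ t, q i) * K) ξ = ∑ i ∈ t, q i (K ξ - y) + ∑ i ∈ t, q i y := by
    simp [sum_apply]
  rw [hsplit]
  calc _ ≤ ‖K ξ - y‖ + ‖∑ i ∈ t, q i y‖ := norm_add_le_of_le (hq.norm_sum_apply_le t _) le_rfl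
    _ ≤ ε / 2 + ε / 2 := add_le_add (dist_eq_norm (K ξ) y ▸ (Metric.mem_ball.mp hy).le)
        (hS y t hty).le
    _ = ε := add_halves ε

theorem exists_norm_star_mul_sum_le_of_isCompactOperator {K : H →L[ℂ] H}
    (hK : IsCompactOperator K) {ε : ℝ} (hε : 0 < ε) :
    ∃ s : Finset ι, ∀ t, Disjoint t s → ‖star K * ∑ i ∈ t, q i‖ ≤ ε := by
  obtain ⟨s, hs⟩ := hq.exists_norm_sum_mul_le_of_isCompactOperator hK hε
  refine ⟨s, fun t ht => ?_⟩
  rw [← norm_star, star_mul, star_star, (hq.isStarProjection_sum t).isSelfAdjoint.star_eq]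
  exact hs t ht

theorem summable_star_mul_mul_mul_mul {K : H →L[ℂ] H} (hK : IsCompactOperator K)
    (X : H →L[ℂ] H) : Summable fun i => star K * (q i * X * q i) := by
  refine summable_iff_vanishing_norm.mpr fun ε hε => ?_
  obtain ⟨s, hs⟩ := hq.exists_norm_star_mul_sum_le_of_isCompactOperator hK
    (div_pos hε (by positivity : 0 < ‖X‖ + 1))
  refine ⟨s, fun t ht => ?_⟩
  have hfactor : ∑ i ∈ t, star K * (q i * X * q i)
      = (star K * ∑ i ∈ t, q i) * ∑ i ∈ t, q i * X * q i := by
    rw [Finset.mul_sum t fun i => q i * X * q i]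
    refine Finset.sum_congr rfl fun i hi => ?_
    simp only [← mul_assoc]
    rw [mul_assoc (star K) (∑ j ∈ t, q j), hq.sum_mul_of_mem hi]
  rw [hfactor]
  calc _ ≤ ε / (‖X‖ + 1) * ‖X‖ :=
        norm_mul_le_of_le (hs t ht) (hq.norm_sum_mul_mul_le X t)
    _ < ε := by
        rw [div_mul_eq_mul_div, div_lt_iff₀ (by positivity)]
        nlinarith [norm_nonneg X]

theorem summable_mul_star_mul {K : H →L[ℂ] H} (hK : IsCompactOperator K) :
    Summable fun i => q i * star K * q i := by
  refine summable_iff_vanishing_norm.mpr fun ε hε => ?_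
  obtain ⟨s, hs⟩ := hq.exists_norm_star_mul_sum_le_of_isCompactOperator hK (half_pos hε)
  refine ⟨s, fun t ht => ?_⟩
  have hfactor : ∑ i ∈ t, q i * star K * q i = ∑ i ∈ t, q i * (star K * ∑ j ∈ t, q j) * q i :=
    Finset.sum_congr rfl fun i hi => by
      rw [mul_assoc (q i) (star K * _), mul_assoc (star K), hq.sum_mul_of_mem hi, mul_assoc]
  rw [hfactor]
  exact (hq.norm_sum_mul_mul_le _ t).trans_lt ((hs t ht).trans_lt (half_lt_self hε))

theorem summable_conjDiff_mul {a b : H →L[ℂ] H} (hab : IsCompactOperator ⇑(a - b))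
    (hab' : IsCompactOperator ⇑(star (a - b))) : Summable fun i => conjDiff a b (q i) * q i := by
  convert (hq.summable_star_mul_mul_mul_mul hab' (star a)).add
    ((hq.summable_mul_star_mul hab).mul_left b) using 2 with i
  simp only [conjDiff, star_star, star_sub]
  noncomm_ring

theorem apply_sum_of_mem {s : Finset ι} {i : ι} (hi : i ∈ s) (x : H) :
    q i (∑ j ∈ s, q j x) = q i x := by
  rw [← sum_apply, ← mul_apply_eq_comp, hq.mul_sum_of_mem hi]

theorem exists_isCompactOperator_apply_eq_and_mul_eq_zero (s : Finset ι) (x : H) :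
    ∃ R : H →L[ℂ] H, IsCompactOperator R ∧ ‖R‖ ≤ 1 ∧
      (∀ i ∈ s, R (q i x) = q i x) ∧ ∀ i ∉ s, R * q i = 0 := by
  let U := Submodule.span ℂ ((fun i => q i x) '' s)
  have : FiniteDimensional ℂ U := FiniteDimensional.span_of_finite ℂ (s.finite_toSet.image _)
  refine ⟨U.starProjection, ?_, U.starProjection_norm_le, fun i hi => ?_, fun i hi => ?_⟩
  · exact (isCompactOperator_of_locallyCompactSpace_dom U.orthogonalProjectionOnto).clm_comp
      U.subtypeL
  · exact U.starProjection_eq_self_iff.mpr (Submodule.subset_span ⟨i, hi, rfl⟩)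
  · ext y
    refine U.starProjection_apply_eq_zero_iff.mpr <| Submodule.isOrtho_iff_le.mp
      (Submodule.isOrtho_span.mpr ?_) (Submodule.mem_span_singleton_self _)
    rintro _ rfl _ ⟨j, hj, rfl⟩
    exact hq.inner_apply_apply_eq_zero (fun hij : i = j => hi (hij ▸ hj)) _ _

end Hilbert

end IsOrthogonalProjectionFamily

theorem pinch_eq_sum_of_mul_eq_zero {H : Type*} [NormedAddCommGroup H] [InnerProductSpace ℂ H]
    {p : ℕ → H →L[ℂ] H} {X : H →L[ℂ] H} {s : Finset ℕ} (hX : ∀ i ∉ s, X * p i = 0) :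
    pinch p X = ∑ i ∈ s, p i * X * p i :=
  tsum_eq_sum fun i hi => by rw [mul_assoc, hX i hi, mul_zero]

section Pinching

variable {H : Type*} [NormedAddCommGroup H] [InnerProductSpace ℂ H] [CompleteSpace H]
  {p : ℕ → H →L[ℂ] H}

theorem norm_sum_conjDiff_mul_mul_mul_le (hp : IsOrthogonalProjectionFamily p)
    {u v : H →L[ℂ] H} {C : ℝ} (hC : 0 ≤ C)
    (hbound : ∀ y : H →L[ℂ] H, IsCompactOperator ⇑y → ‖y‖ ≤ 1 →
      ‖u * pinch p (star u * y) - v * pinch p (star v * y)‖ ≤ C)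
    {g h : H →L[ℂ] H} (hg : ‖g‖ ≤ 1) (hh : ‖h‖ ≤ 1) (s : Finset ℕ) :
    ‖∑ i ∈ s, conjDiff u v (p i) * (g * p i * h)‖ ≤ C := by
  refine ContinuousLinearMap.opNorm_le_bound _ hC fun ζ => ?_
  obtain ⟨R, hRcpt, hRnorm, hRfix, hRkill⟩ :=
    hp.exists_isCompactOperator_apply_eq_and_mul_eq_zero s (h ζ)
  set η := ∑ i ∈ s, p i (h ζ)
  have hpinch : ∀ w, pinch p (w * (g * R)) η = ∑ i ∈ s, p i (w (g (p i (h ζ)))) := fun w => by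
    rw [pinch_eq_sum_of_mul_eq_zero fun i hi => by simp only [mul_assoc, hRkill i hi, mul_zero],
      sum_apply]
    refine Finset.sum_congr rfl fun i hi => ?_
    simp only [mul_apply_eq_comp, η, hp.apply_sum_of_mem hi, hRfix i hi]
  have hη : ‖η‖ ≤ ‖ζ‖ :=
    (hp.norm_sum_apply_le s _).trans ((h.le_of_opNorm_le hh ζ).trans_eq (one_mul _))
  have hy := hbound (g * R) (hRcpt.clm_comp g) (norm_mul_le_of_le hg hRnorm |>.trans_eq (one_mul 1))
  calc _ = ‖(u * pinch p (star u * (g * R)) - v * pinch p (star v * (g * R))) η‖ := by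
        simp only [sub_apply, mul_apply_eq_comp, hpinch, sum_apply, map_sum, conjDiff, sub_mul,
          ← Finset.sum_sub_distrib]
    _ ≤ C * ‖η‖ := (_ : H →L[ℂ] H).le_of_opNorm_le hy η
    _ ≤ C * ‖ζ‖ := mul_le_mul_of_nonneg_left hη hC

theorem norm_sum_conjDiff_mul_le (hp : IsOrthogonalProjectionFamily p)
    {u v : H →L[ℂ] H} {C : ℝ} (hC : 0 ≤ C)
    (hbound : ∀ y : H →L[ℂ] H, IsCompactOperator ⇑y → ‖y‖ ≤ 1 →
      ‖u * pinch p (star u * y) - v * pinch p (star v * y)‖ ≤ C) (s : Finset ℕ) :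
    ‖∑ i ∈ s, conjDiff u v (p i) * p i‖ ≤ C := by
  simpa only [one_mul, mul_one] using norm_sum_conjDiff_mul_mul_mul_le hp hC hbound
    (g := 1) (h := 1) ContinuousLinearMap.norm_id_le ContinuousLinearMap.norm_id_le s

theorem norm_sum_conjDiff_le (hp : IsOrthogonalProjectionFamily p)
    {u v : H →L[ℂ] H} (hu : star u * u = 1) (hv : star v * v = 1) {C : ℝ} (hC : 0 ≤ C)
    (hbound : ∀ y : H →L[ℂ] H, IsCompactOperator ⇑y → ‖y‖ ≤ 1 →
      ‖u * pinch p (star u * y) - v * pinch p (star v * y)‖ ≤ C) (s : Finset ℕ) :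
    ‖∑ i ∈ s, conjDiff u v (p i)‖ ≤ 2 * C := by
  have hbudget {w : H →L[ℂ] H} (hw : star w * w = 1) :
      ‖∑ i ∈ s, conjDiff u v (p i) * (w * p i * star w)‖ ≤ C :=
    norm_sum_conjDiff_mul_mul_mul_le hp hC hbound (norm_le_one_of_star_mul_self_eq_one hw)
      (by rw [norm_star]; exact norm_le_one_of_star_mul_self_eq_one hw) s
  have hsplit : ∑ i ∈ s, conjDiff u v (p i) = ∑ i ∈ s, conjDiff u v (p i) * (u * p i * star u)
      + star (∑ i ∈ s, conjDiff u v (p i) * (v * p i * star v)) := by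
    rw [star_sum, ← Finset.sum_add_distrib]
    refine Finset.sum_congr rfl fun i _ => ?_
    have hE := (hp.isStarProjection i).conj hu
    have hF := (hp.isStarProjection i).conj hv
    rw [star_mul, hF.isSelfAdjoint.star_eq, conjDiff,
      (hE.isSelfAdjoint.sub hF.isSelfAdjoint).star_eq]
    exact hE.isIdempotentElem.sub_eq_sub_mul_add_mul_sub hF.isIdempotentElem
  rw [hsplit, two_mul]
  exact norm_add_le_of_le (hbudget hu) ((norm_star _).trans_le (hbudget hv))

end Pinching

section ExtFam

variable {H : Type*} [NormedAddCommGroup H] [InnerProductSpace ℂ H] [CompleteSpace H]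
  {p : ℕ → H →L[ℂ] H} {p0 : H →L[ℂ] H}

theorem isOrthogonalProjectionFamily_extFam
    (hp : IsOrthogonalProjectionFamily p) (hp0 : IsStarProjection p0) (h : ∀ i, p i * p0 = 0) :
    IsOrthogonalProjectionFamily (extFam p0 p) where
  isStarProjection
    | 0 => hp0
    | i + 1 => hp.isStarProjection i
  mul_eq_zero
    | 0, 0, h00 => (h00 rfl).elim
    | 0, j + 1, _ => show p0 * p j = 0 by
        simpa [(hp.isStarProjection j).isSelfAdjoint.star_eq, hp0.isSelfAdjoint.star_eq]
          using congrArg star (h j)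
    | i + 1, 0, _ => h i
    | i + 1, j + 1, hij => hp.mul_eq_zero fun e => hij (congrArg (· + 1) e)

theorem norm_conjDiff_apply_le (hcomplete : ∀ x, HasSum (fun i => extFam p0 p i x) x)
    {u v : H →L[ℂ] H} (hu : u * star u = 1) (hv : v * star v = 1) {c : ℝ}
    (hD : ∀ s, ‖∑ i ∈ s, conjDiff u v (p i)‖ ≤ c) (x : H) : ‖conjDiff u v p0 x‖ ≤ c * ‖x‖ := by
  have hconj {w : H →L[ℂ] H} (hw : w * star w = 1) :
      HasSum (fun i => (w * extFam p0 p i * star w) x) x := by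
    have := (hcomplete (star w x)).mapL w
    rw [← mul_apply_eq_comp w, hw] at this
    exact this
  have htail : HasSum (fun n => conjDiff u v (p n) x) (-conjDiff u v p0 x) := by
    have h0 := (hasSum_nat_add_iff' 1).mpr (sub_self x ▸ (hconj hu).sub (hconj hv))
    simpa [conjDiff, extFam] using h0
  rw [← norm_neg]
  exact htail.norm_le_of_forall_norm_sum_le fun s => by
    rw [← sum_apply]; exact (_ : H →L[ℂ] H).le_of_opNorm_le (hD s) x

theorem norm_conjDiff_mul_le (hp0 : IsStarProjection p0)
    (hcomplete : ∀ x, HasSum (fun i => extFam p0 p i x) x)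
    {u v : H →L[ℂ] H} (hu : u * star u = 1) (hv : v * star v = 1) {c : ℝ} (hc : 0 ≤ c)
    (hD : ∀ s, ‖∑ i ∈ s, conjDiff u v (p i)‖ ≤ c) : ‖conjDiff u v p0 * p0‖ ≤ c :=
  ContinuousLinearMap.opNorm_le_bound _ hc fun x =>
    (norm_conjDiff_apply_le hcomplete hu hv hD (p0 x)).trans <|
      mul_le_mul_of_nonneg_left (hp0.norm_apply_le x) hc

end ExtFam

theorem pinching_orbit_diagonal_sum_estimate_general
    {H : Type*} [NormedAddCommGroup H] [InnerProductSpace ℂ H] [CompleteSpace H]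
    (p : ℕ → H →L[ℂ] H)
    (hsa : ∀ i, IsSelfAdjoint (p i))
    (hidem : ∀ i, p i * p i = p i)
    (horth : ∀ i j, i ≠ j → p i * p j = 0)
    (p0 : H →L[ℂ] H) (hp0sa : IsSelfAdjoint p0) (hp0idem : p0 * p0 = p0)
    (hp0fix : ∀ ξ : H, p0 ξ = ξ ↔ ∀ i, p i ξ = 0)
    (u v : H →L[ℂ] H)
    (hu1 : star u * u = 1) (hu2 : u * star u = 1) (hucpt : IsCompactOperator ⇑(u - 1))
    (hv1 : star v * v = 1) (hv2 : v * star v = 1) (hvcpt : IsCompactOperator ⇑(v - 1))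
    (C : ℝ) (hC : 0 ≤ C)
    (hbound : ∀ y : H →L[ℂ] H, IsCompactOperator ⇑y → ‖y‖ ≤ 1 →
      ‖u * pinch p (star u * y) - v * pinch p (star v * y)‖ ≤ C) :
    Summable (fun i =>
      (u * extFam p0 p i * star u - v * extFam p0 p i * star v) * extFam p0 p i) ∧
    ‖∑' i, (u * extFam p0 p i * star u - v * extFam p0 p i * star v) * extFam p0 p i‖
      ≤ 3 * C := by
  have hp : IsOrthogonalProjectionFamily p := ⟨fun i => ⟨hidem i, hsa i⟩, horth⟩
  have hp0 : IsStarProjection p0 := ⟨hp0idem, hp0sa⟩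
  have hq : IsOrthogonalProjectionFamily (extFam p0 p) :=
    isOrthogonalProjectionFamily_extFam hp hp0 fun i => ContinuousLinearMap.ext fun ξ =>
      (hp0fix (p0 ξ)).mp (by rw [← mul_apply_eq_comp, hp0idem]) i
  have hcomplete := hq.hasSum_apply fun x hx => (hp0fix x).mpr (fun i => hx (i + 1)) ▸ hx 0
  have hcpt : IsCompactOperator ⇑(u - v) := by
    rw [show u - v = (u - 1) - (v - 1) by abel]
    exact hucpt.sub hvcpt
  have hsum : Summable fun i => conjDiff u v (extFam p0 p i) * extFam p0 p i :=
    hq.summable_conjDiff_mul hcpt (isCompactOperator_star_sub hu1 hv1 hucpt hvcpt)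
  refine ⟨hsum, ?_⟩
  have hhead := norm_conjDiff_mul_le hp0 hcomplete hu2 hv2 (by positivity)
    (norm_sum_conjDiff_le hp hu1 hv1 hC hbound)
  have htail := ((summable_nat_add_iff 1).mpr hsum).hasSum.norm_le_of_forall_norm_sum_le
    (norm_sum_conjDiff_mul_le hp hC hbound)
  calc _ = ‖conjDiff u v p0 * p0 + ∑' n, conjDiff u v (p n) * p n‖ :=
        congrArg norm hsum.tsum_eq_zero_add
    _ ≤ 2 * C + C := norm_add_le_of_le hhead htail
    _ = 3 * C := by ring

/-- For unitaries `u, v` with `u - 1, v - 1` compact: (a) the family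
`((u p_i u* - v p_i v*) p_i)_{i ≥ 0}` (including the index `0` block `p₀`) is summable in
operator norm; and (b) if `C ≥ 0` bounds `‖u * P (u* y) - v * P (v* y)‖` over compact `y` with
`‖y‖ ≤ 1`, then `‖∑_{i ≥ 0} (u p_i u* - v p_i v*) p_i‖ ≤ 3C`. -/
theorem pinching_orbit_diagonal_sum_estimate
    {H : Type*} [NormedAddCommGroup H] [InnerProductSpace ℂ H] [CompleteSpace H]
    [TopologicalSpace.SeparableSpace H]
    (hinf : ¬ FiniteDimensional ℂ H)
    (p : ℕ → H →L[ℂ] H)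
    (hsa : ∀ i, IsSelfAdjoint (p i))
    (hidem : ∀ i, p i * p i = p i)
    (horth : ∀ i j, i ≠ j → p i * p j = 0)
    (p0 : H →L[ℂ] H) (hp0sa : IsSelfAdjoint p0) (hp0idem : p0 * p0 = p0)
    (hp0fix : ∀ ξ : H, p0 ξ = ξ ↔ ∀ i, p i ξ = 0)
    (u v : H →L[ℂ] H)
    (hu1 : star u * u = 1) (hu2 : u * star u = 1) (hucpt : IsCompactOperator ⇑(u - 1))
    (hv1 : star v * v = 1) (hv2 : v * star v = 1) (hvcpt : IsCompactOperator ⇑(v - 1))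
    (C : ℝ) (hC : 0 ≤ C)
    (hbound : ∀ y : H →L[ℂ] H, IsCompactOperator ⇑y → ‖y‖ ≤ 1 →
      ‖u * pinch p (star u * y) - v * pinch p (star v * y)‖ ≤ C) :
    Summable (fun i =>
      (u * extFam p0 p i * star u - v * extFam p0 p i * star v) * extFam p0 p i) ∧
    ‖∑' i, (u * extFam p0 p i * star u - v * extFam p0 p i * star v) * extFam p0 p i‖
      ≤ 3 * C :=
  pinching_orbit_diagonal_sum_estimate_general p hsa hidem horth p0 hp0sa hp0idem hp0fix u v hu1 hu2
    hucpt hv1 hv2 hvcpt C hC hbound
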